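/- Let $T^n$ be an $n$-tree and $w : T^n \to [0,\infty)$ a weight satisfying the surrogate maximum principle with parameters $\kappa \in (0,1]$ and $C < \infty$: for all nonnegative $\mu, \rho$ and all $\delta > 0$, $\sum \mathbf{V}^\mu_\delta\, \rho \leq C (\delta |\rho|)^\kappa (\mathcal{E}_\delta[\mu] \mathcal{E}[\rho])^{(1-\kappa)/2}$. Suppose $\mu, \rho$ are nonnegative functions on $T^n$ with hereditary Carleson constants $[w,\mu]_{HC} \leq 1$ and $[w,\rho]_{HC} \leq 1$, meaning $\mathcal{E}[\mu \mathbf{1}_E] \leq \mu(E)$ and $\mathcal{E}[\rho \mathbf{1}_E] \leq \rho(E)$ for all subsets $E$. Then there exists $\kappa' > 0$ (depending only on $\kappa$) such that $\sum_{T^n} \mathbf{V}^\mu \, \rho \lesssim |\mu|^{1/2 - \kappa'}\, |\rho|^{1/2 + \kappa'}$, with implicit constant depending only on $C$ and $\kappa$; one may take $\kappa' = \frac{\kappa}{2(1+\kappa)}$. -/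

import Mathlib

/-
Induct on `k` with `|μ| ≤ 2^k |ρ|`, and put `a = 1/2 - κ'`. If `|μ| ≤ |ρ|`, Cauchy–Schwarz gives
`∑ V^μ ρ ≤ (ℰ[μ] ℰ[ρ])^{1/2} ≤ (|μ| |ρ|)^{1/2} ≤ |μ|^a |ρ|^{1-a}`. Otherwise split `V^μ` at the
level `δ = 2^{1/a}`. Testing the surrogate maximum principle against `μ` itself gives
`ℰ_δ[μ] ≲ |μ|`, and then testing it against `ρ` gives
`∑ V^μ_δ ρ ≲ |μ|^{(1-κ)/2} |ρ|^{(1+κ)/2} ≤ |μ|^a |ρ|^{1-a}`, since `|ρ| ≤ |μ|` and `(1-κ)/2 ≤ a`.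
What remains is bounded by the pairing of `ρ` with the potential of `μ 1_D`, `D = {V^μ > δ}`.
By Chebyshev `μ(D) ≤ |μ|/δ`, so the induction hypothesis applies to `μ 1_D`, and since `δ^a = 2`
it contributes at most half of the constant.
-/

open Finset
open scoped Classical

/-- A tree order: the set of elements above any given element is totally ordered. -/
def IsTreeOrder (T : Type*) [PartialOrder T] : Prop :=
  ∀ ω a b : T, ω ≤ a → ω ≤ b → a ≤ b ∨ b ≤ a

/-- The Hardy operator `I f α = ∑_{α' ≥ α} f α'`. -/
noncomputable def hI {T : Type*} [Fintype T] [PartialOrder T] (f : T → ℝ) (a : T) : ℝ :=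
  ∑ b, if a ≤ b then f b else 0

/-- The adjoint Hardy operator `I* f β = ∑_{α ≤ β} f α`. -/
noncomputable def hIstar {T : Type*} [Fintype T] [PartialOrder T] (f : T → ℝ) (b : T) : ℝ :=
  ∑ a, if a ≤ b then f a else 0

/-- `b` is a child of `β`: a maximal element of the set of elements strictly below `β`. -/
def IsChild {T : Type*} [PartialOrder T] (b β : T) : Prop :=
  b < β ∧ ∀ c, b < c → c < β → False

/-- The difference operator `Δ f β = f β - ∑_{β' ∈ ch β} f β'`. -/
noncomputable def hDelta {T : Type*} [Fintype T] [PartialOrder T] (f : T → ℝ) (β : T) : ℝ :=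
  f β - ∑ b, if IsChild b β then f b else 0

/-- A superadditive function on a tree: `f β ≥ ∑_{β' ∈ ch β} f β'` for all `β`. -/
def Superadd {T : Type*} [Fintype T] [PartialOrder T] (f : T → ℝ) : Prop :=
  ∀ β : T, (∑ b, if IsChild b β then f b else 0) ≤ f β

section HardyOperators

variable {X : Type*} [Fintype X] [PartialOrder X]

lemma hI_nonneg {f : X → ℝ} (hf : ∀ a, 0 ≤ f a) (a : X) : 0 ≤ hI f a :=
  sum_nonneg fun b _ => by split_ifs <;> simp [hf b]

lemma hIstar_nonneg {f : X → ℝ} (hf : ∀ a, 0 ≤ f a) (b : X) : 0 ≤ hIstar f b :=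
  sum_nonneg fun a _ => by split_ifs <;> simp [hf a]

lemma hI_add (f g : X → ℝ) (a : X) : hI (f + g) a = hI f a + hI g a := by
  simp only [hI, ← sum_add_distrib, Pi.add_apply]
  exact sum_congr rfl fun b _ => by split_ifs <;> simp

lemma hI_mono {f g : X → ℝ} (h : ∀ a, f a ≤ g a) (a : X) : hI f a ≤ hI g a :=
  sum_le_sum fun b _ => by split_ifs <;> simp [h b]

lemma hI_antitone {f : X → ℝ} (hf : ∀ a, 0 ≤ f a) : Antitone (hI f) := fun a a' h =>
  sum_le_sum fun b _ => by
    by_cases h' : a' ≤ b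
    · simp [h', h.trans h']
    · split_ifs <;> simp [hf b]

lemma sum_hI_mul (f g : X → ℝ) : ∑ a, hI f a * g a = ∑ b, f b * hIstar g b := by
  simp only [hI, hIstar, sum_mul, mul_sum, ite_mul, mul_ite, zero_mul, mul_zero]
  rw [sum_comm]

lemma hIstar_indicator_of_mem {D : Set X} (hD : IsLowerSet D) (f : X → ℝ) {b : X} (hb : b ∈ D) :
    hIstar (D.indicator f) b = hIstar f b :=
  sum_congr rfl fun a _ => by
    by_cases h : a ≤ b
    · simp [h, hD h hb]
    · simp [h]

end HardyOperators

section Potentials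

variable {X : Type*} [Fintype X] [PartialOrder X]

noncomputable def potential (w μ : X → ℝ) : X → ℝ :=
  hI fun x => w x * hIstar μ x

noncomputable def truncPotential (w μ : X → ℝ) (δ : ℝ) : X → ℝ :=
  hI fun x => (if potential w μ x ≤ δ then 1 else 0) * (w x * hIstar μ x)

noncomputable def energy (w μ : X → ℝ) : ℝ :=
  ∑ a, w a * hIstar μ a ^ 2

noncomputable def truncEnergy (w μ : X → ℝ) (δ : ℝ) : ℝ :=
  ∑ a, (if potential w μ a ≤ δ then 1 else 0) * (w a * hIstar μ a ^ 2)

def SurrogateMaxPrinciple (κ C : ℝ) (w : X → ℝ) : Prop :=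
  ∀ μ ρ : X → ℝ, (∀ a, 0 ≤ μ a) → (∀ a, 0 ≤ ρ a) → ∀ δ : ℝ, 0 < δ →
    ∑ a, truncPotential w μ δ a * ρ a ≤
      C * (δ * ∑ a, ρ a) ^ κ * (truncEnergy w μ δ * energy w ρ) ^ ((1 - κ) / 2)

/-- `[w, μ]_HC ≤ 1`. -/
def HereditaryCarlesonLeOne (w μ : X → ℝ) : Prop :=
  ∀ E : Set X, energy w (E.indicator μ) ≤ ∑ a, E.indicator μ a

variable {w μ ρ : X → ℝ}

lemma sum_potential_mul (w μ ρ : X → ℝ) :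
    ∑ a, potential w μ a * ρ a = ∑ a, w a * hIstar μ a * hIstar ρ a :=
  sum_hI_mul _ _

lemma sum_potential_mul_self (w μ : X → ℝ) : ∑ a, potential w μ a * μ a = energy w μ := by
  rw [sum_potential_mul, energy]
  exact sum_congr rfl fun a _ => by ring

lemma sum_truncPotential_mul_self (w μ : X → ℝ) (δ : ℝ) :
    ∑ a, truncPotential w μ δ a * μ a = truncEnergy w μ δ := by
  rw [truncPotential, sum_hI_mul, truncEnergy]
  exact sum_congr rfl fun a _ => by ring

lemma energy_nonneg (hw : ∀ a, 0 ≤ w a) (μ : X → ℝ) : 0 ≤ energy w μ :=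
  sum_nonneg fun a _ => mul_nonneg (hw a) (sq_nonneg _)

lemma truncEnergy_nonneg (hw : ∀ a, 0 ≤ w a) (μ : X → ℝ) (δ : ℝ) : 0 ≤ truncEnergy w μ δ :=
  sum_nonneg fun a _ => mul_nonneg (by split_ifs <;> norm_num) (mul_nonneg (hw a) (sq_nonneg _))

lemma sq_sum_potential_mul_le (hw : ∀ a, 0 ≤ w a) (μ ρ : X → ℝ) :
    (∑ a, potential w μ a * ρ a) ^ 2 ≤ energy w μ * energy w ρ := by
  rw [sum_potential_mul]
  exact sum_sq_le_sum_mul_sum_of_sq_le_mul _ (fun a _ => mul_nonneg (hw a) (sq_nonneg _))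
    (fun a _ => mul_nonneg (hw a) (sq_nonneg _)) fun a _ => le_of_eq (by ring)

lemma HereditaryCarlesonLeOne.energy_le (h : HereditaryCarlesonLeOne w μ) :
    energy w μ ≤ ∑ a, μ a := by
  simpa only [Set.indicator_univ] using h Set.univ

lemma HereditaryCarlesonLeOne.indicator (h : HereditaryCarlesonLeOne w μ) (D : Set X) :
    HereditaryCarlesonLeOne w (D.indicator μ) := fun E => by
  simpa only [Set.indicator_indicator] using h (E ∩ D)

lemma isLowerSet_lt_potential (hw : ∀ a, 0 ≤ w a) (hμ : ∀ a, 0 ≤ μ a) (δ : ℝ) :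
    IsLowerSet {x | δ < potential w μ x} := fun _ _ h hx =>
  hx.trans_le (hI_antitone (fun x => mul_nonneg (hw x) (hIstar_nonneg hμ x)) h)

/-- On the lower set `D = {V^μ > δ}` one has `I*μ = I*(μ 1_D)`. -/
lemma potential_le_truncPotential_add (hw : ∀ a, 0 ≤ w a) (hμ : ∀ a, 0 ≤ μ a) (δ : ℝ) (x : X) :
    potential w μ x ≤
      truncPotential w μ δ x + potential w ({y | δ < potential w μ y}.indicator μ) x := by
  set D := {y | δ < potential w μ y}
  have hsplit : (fun y => w y * hIstar μ y) =
      (fun y => (if potential w μ y ≤ δ then 1 else 0) * (w y * hIstar μ y)) +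
        D.indicator fun y => w y * hIstar μ y := by
    ext y
    by_cases hy : potential w μ y ≤ δ
    · simp [hy, D]
    · simp only [Pi.add_apply, if_neg hy, zero_mul, zero_add]
      exact (Set.indicator_of_mem (show y ∈ D from not_le.mp hy) (fun y => w y * hIstar μ y)).symm
  rw [potential, hsplit, hI_add]
  refine add_le_add le_rfl (hI_mono (fun y => ?_) x)
  by_cases hy : y ∈ D
  · rw [Set.indicator_of_mem hy, hIstar_indicator_of_mem (isLowerSet_lt_potential hw hμ δ) μ hy]
  · rw [Set.indicator_of_notMem hy]
    exact mul_nonneg (hw y) (hIstar_nonneg (Set.indicator_nonneg fun a _ => hμ a) y)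

lemma mul_sum_indicator_lt_potential_le (hw : ∀ a, 0 ≤ w a) (hμ : ∀ a, 0 ≤ μ a) (δ : ℝ) :
    δ * ∑ a, {y | δ < potential w μ y}.indicator μ a ≤ energy w μ := by
  rw [← sum_potential_mul_self, mul_sum]
  refine sum_le_sum fun a _ => ?_
  by_cases ha : δ < potential w μ a
  · rw [Set.indicator_of_mem (show a ∈ {y | δ < potential w μ y} from ha)]
    exact mul_le_mul_of_nonneg_right ha.le (hμ a)
  · rw [Set.indicator_of_notMem (show a ∉ {y | δ < potential w μ y} from ha), mul_zero]
    exact mul_nonneg (hI_nonneg (fun x => mul_nonneg (hw x) (hIstar_nonneg hμ x)) a) (hμ a)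

end Potentials

lemma rpow_sub_le_of_le_mul_rpow {x A p : ℝ} (hx : 0 ≤ x) (hA : 0 ≤ A) (hp : p < 1)
    (h : x ≤ A * x ^ p) : x ^ (1 - p) ≤ A := by
  rcases hx.eq_or_lt with rfl | hx
  · rwa [Real.zero_rpow (by linarith)]
  refine le_of_mul_le_mul_right ?_ (Real.rpow_pos_of_pos hx p)
  rwa [← Real.rpow_add hx, sub_add_cancel, Real.rpow_one]

lemma rpow_add_mul_rpow_le {x y p q s : ℝ} (hx : 0 ≤ x) (hxy : x ≤ y) (hp : 0 ≤ p)
    (hq : 0 ≤ q) (hs : 0 ≤ s) : x ^ (p + s) * y ^ q ≤ x ^ p * y ^ (q + s) := by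
  have hy : 0 ≤ y := hx.trans hxy
  rw [Real.rpow_add_of_nonneg hx hp hs, Real.rpow_add_of_nonneg hy hq hs, mul_assoc,
    mul_comm (y ^ q)]
  gcongr

section SurrogateMaximumPrinciple

variable {X : Type*} [Fintype X] [PartialOrder X] {κ C : ℝ} {w μ ρ : X → ℝ}

lemma truncEnergy_le (hκ0 : 0 ≤ κ) (hκ1 : κ ≤ 1) (hC : 0 ≤ C) (hw : ∀ a, 0 ≤ w a)
    (hSMP : SurrogateMaxPrinciple κ C w) (hμ : ∀ a, 0 ≤ μ a) (hE : energy w μ ≤ ∑ a, μ a)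
    {δ : ℝ} (hδ : 0 < δ) :
    truncEnergy w μ δ ≤ (C * δ ^ κ) ^ ((1 + κ) / 2)⁻¹ * ∑ a, μ a := by
  set M := ∑ a, μ a
  set Y := truncEnergy w μ δ
  have hM : 0 ≤ M := sum_nonneg fun a _ => hμ a
  have hY : 0 ≤ Y := truncEnergy_nonneg hw μ δ
  have hSMPμ : Y ≤ C * (δ * M) ^ κ * (Y * M) ^ ((1 - κ) / 2) := by
    have := hSMP μ μ hμ hμ δ hδ
    rw [sum_truncPotential_mul_self] at this
    refine this.trans ?_
    gcongr
    exact mul_nonneg hY (energy_nonneg hw μ)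
  have hMexp : M ^ κ * M ^ ((1 - κ) / 2) = M ^ ((1 + κ) / 2) := by
    rw [← Real.rpow_add_of_nonneg hM hκ0 (by linarith)]
    ring_nf
  have hpow : Y ^ ((1 + κ) / 2) ≤ C * δ ^ κ * M ^ ((1 + κ) / 2) := by
    have h := rpow_sub_le_of_le_mul_rpow (A := C * δ ^ κ * M ^ ((1 + κ) / 2)) hY
      (by positivity) (by linarith : (1 - κ) / 2 < 1)
      (hSMPμ.trans_eq (by rw [Real.mul_rpow hδ.le hM, Real.mul_rpow hY hM, ← hMexp]; ring))
    rwa [show 1 - (1 - κ) / 2 = (1 + κ) / 2 by ring] at h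
  calc Y ≤ (C * δ ^ κ * M ^ ((1 + κ) / 2)) ^ ((1 + κ) / 2)⁻¹ :=
        (Real.le_rpow_inv_iff_of_pos hY (by positivity) (by linarith)).mpr hpow
    _ = (C * δ ^ κ) ^ ((1 + κ) / 2)⁻¹ * M := by
        rw [Real.mul_rpow (by positivity) (by positivity), Real.rpow_rpow_inv hM (by linarith)]

lemma sum_truncPotential_mul_le (hκ0 : 0 ≤ κ) (hκ1 : κ ≤ 1) (hC : 0 ≤ C) (hw : ∀ a, 0 ≤ w a)
    (hSMP : SurrogateMaxPrinciple κ C w) (hμ : ∀ a, 0 ≤ μ a) (hρ : ∀ a, 0 ≤ ρ a)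
    (hEμ : energy w μ ≤ ∑ a, μ a) (hEρ : energy w ρ ≤ ∑ a, ρ a) {δ : ℝ} (hδ : 0 < δ) :
    ∑ a, truncPotential w μ δ a * ρ a ≤
      (C * δ ^ κ) ^ ((1 + κ) / 2)⁻¹ * (∑ a, μ a) ^ ((1 - κ) / 2) *
        (∑ a, ρ a) ^ ((1 + κ) / 2) := by
  set M := ∑ a, μ a
  set R := ∑ a, ρ a
  set P := (C * δ ^ κ) ^ ((1 + κ) / 2)⁻¹
  have hM : 0 ≤ M := sum_nonneg fun a _ => hμ a
  have hR : 0 ≤ R := sum_nonneg fun a _ => hρ a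
  have hP0 : 0 ≤ P := by positivity
  have hP : C * δ ^ κ = P ^ ((1 + κ) / 2) :=
    (Real.rpow_inv_rpow (by positivity) (by linarith)).symm
  calc ∑ a, truncPotential w μ δ a * ρ a
      ≤ C * (δ * R) ^ κ * (truncEnergy w μ δ * energy w ρ) ^ ((1 - κ) / 2) :=
        hSMP μ ρ hμ hρ δ hδ
    _ ≤ C * (δ * R) ^ κ * (P * M * R) ^ ((1 - κ) / 2) := by
        gcongr
        · exact mul_nonneg (truncEnergy_nonneg hw μ δ) (energy_nonneg hw ρ)
        · exact energy_nonneg hw ρ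
        · exact truncEnergy_le hκ0 hκ1 hC hw hSMP hμ hEμ hδ
    _ = P ^ ((1 + κ) / 2) * P ^ ((1 - κ) / 2) * M ^ ((1 - κ) / 2) *
          (R ^ κ * R ^ ((1 - κ) / 2)) := by
        rw [Real.mul_rpow hδ.le hR, Real.mul_rpow (mul_nonneg hP0 hM) hR, Real.mul_rpow hP0 hM]
        linear_combination (R ^ κ * P ^ ((1 - κ) / 2) * M ^ ((1 - κ) / 2) * R ^ ((1 - κ) / 2)) * hP
    _ = P * M ^ ((1 - κ) / 2) * R ^ ((1 + κ) / 2) := by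
        rw [← Real.rpow_add_of_nonneg hP0 (by linarith) (by linarith),
          ← Real.rpow_add_of_nonneg hR hκ0 (by linarith),
          show (1 + κ) / 2 + (1 - κ) / 2 = 1 by ring,
          show κ + (1 - κ) / 2 = (1 + κ) / 2 by ring, Real.rpow_one]

end SurrogateMaximumPrinciple

section CarlesonBound

variable {X : Type*} [Fintype X] [PartialOrder X] {κ C a δ : ℝ} {w μ ρ : X → ℝ}

lemma sum_potential_mul_le_of_sum_le (hw : ∀ x, 0 ≤ w x) (hμ : ∀ x, 0 ≤ μ x)
    (hCμ : HereditaryCarlesonLeOne w μ) (hCρ : HereditaryCarlesonLeOne w ρ) (ha0 : 0 ≤ a)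
    (ha : a ≤ 1 / 2) (hμρ : ∑ x, μ x ≤ ∑ x, ρ x) :
    ∑ x, potential w μ x * ρ x ≤ (∑ x, μ x) ^ a * (∑ x, ρ x) ^ (1 - a) := by
  set M := ∑ x, μ x
  set R := ∑ x, ρ x
  have hM : 0 ≤ M := sum_nonneg fun x _ => hμ x
  have hsq : (∑ x, potential w μ x * ρ x) ^ 2 ≤ M * R :=
    (sq_sum_potential_mul_le hw μ ρ).trans
      (mul_le_mul hCμ.energy_le hCρ.energy_le (energy_nonneg hw ρ) hM)
  calc ∑ x, potential w μ x * ρ x ≤ √(M * R) := (le_abs_self _).trans (Real.abs_le_sqrt hsq)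
    _ = M ^ (a + (1 / 2 - a)) * R ^ (1 / 2 : ℝ) := by
        rw [Real.sqrt_mul hM, Real.sqrt_eq_rpow, Real.sqrt_eq_rpow, add_sub_cancel]
    _ ≤ M ^ a * R ^ (1 - a) := by
        have h := rpow_add_mul_rpow_le hM hμρ ha0 (by norm_num : (0 : ℝ) ≤ 1 / 2)
          (by linarith : 0 ≤ 1 / 2 - a)
        rwa [show (1 / 2 : ℝ) + (1 / 2 - a) = 1 - a by ring] at h

lemma sum_potential_mul_le_of_indicator_lt_potential (hκ0 : 0 ≤ κ) (hκ1 : κ ≤ 1) (hC : 0 ≤ C)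
    (hw : ∀ x, 0 ≤ w x) (hSMP : SurrogateMaxPrinciple κ C w) (hμ : ∀ x, 0 ≤ μ x)
    (hρ : ∀ x, 0 ≤ ρ x) (hCμ : HereditaryCarlesonLeOne w μ) (hCρ : HereditaryCarlesonLeOne w ρ)
    (ha : (1 - κ) / 2 ≤ a) (ha1 : a ≤ 1) (hδ : 0 < δ) (hδa : 2 ≤ δ ^ a) (hρμ : ∑ x, ρ x ≤ ∑ x, μ x)
    {K : ℝ} (hK : 1 + 2 * (C * δ ^ κ) ^ ((1 + κ) / 2)⁻¹ ≤ K)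
    (hD : ∑ x, potential w ({y | δ < potential w μ y}.indicator μ) x * ρ x ≤
      K * (∑ x, {y | δ < potential w μ y}.indicator μ x) ^ a * (∑ x, ρ x) ^ (1 - a)) :
    ∑ x, potential w μ x * ρ x ≤ K * (∑ x, μ x) ^ a * (∑ x, ρ x) ^ (1 - a) := by
  set D := {y | δ < potential w μ y}
  set M := ∑ x, μ x
  set R := ∑ x, ρ x
  set P := (C * δ ^ κ) ^ ((1 + κ) / 2)⁻¹
  have ha0 : 0 ≤ a := by linarith
  have hR : 0 ≤ R := sum_nonneg fun x _ => hρ x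
  have hM : 0 ≤ M := hR.trans hρμ
  have hMD : 0 ≤ ∑ x, D.indicator μ x :=
    sum_nonneg fun x _ => Set.indicator_nonneg (fun y _ => hμ y) x
  have hQ : 0 ≤ M ^ a * R ^ (1 - a) := by positivity
  have hsplit : ∑ x, potential w μ x * ρ x ≤
      ∑ x, truncPotential w μ δ x * ρ x + ∑ x, potential w (D.indicator μ) x * ρ x := by
    rw [← sum_add_distrib]
    exact sum_le_sum fun x _ => by
      rw [← add_mul]
      exact mul_le_mul_of_nonneg_right (potential_le_truncPotential_add hw hμ δ x) (hρ x)
  have hnear : ∑ x, truncPotential w μ δ x * ρ x ≤ P * (M ^ a * R ^ (1 - a)) := by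
    refine (sum_truncPotential_mul_le hκ0 hκ1 hC hw hSMP hμ hρ hCμ.energy_le hCρ.energy_le
      hδ).trans ?_
    rw [mul_assoc]
    refine mul_le_mul_of_nonneg_left ?_ (by positivity)
    have h := rpow_add_mul_rpow_le hR hρμ (by linarith : 0 ≤ 1 - a)
      (by linarith : 0 ≤ (1 - κ) / 2) (sub_nonneg.mpr ha)
    rw [mul_comm, mul_comm (M ^ a)]
    rwa [show 1 - a + (a - (1 - κ) / 2) = (1 + κ) / 2 by ring, add_sub_cancel] at h
  have hchebyshev : 2 * (∑ x, D.indicator μ x) ^ a ≤ M ^ a :=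
    calc 2 * (∑ x, D.indicator μ x) ^ a ≤ (δ * ∑ x, D.indicator μ x) ^ a := by
          rw [Real.mul_rpow hδ.le hMD]
          gcongr
      _ ≤ M ^ a := by
          gcongr
          exact (mul_sum_indicator_lt_potential_le hw hμ δ).trans hCμ.energy_le
  have hK0 : 0 ≤ K := by linarith [show 0 ≤ P by positivity]
  have hfar : ∑ x, potential w (D.indicator μ) x * ρ x ≤ K / 2 * (M ^ a * R ^ (1 - a)) := by
    refine hD.trans ?_
    have := mul_le_mul_of_nonneg_left hchebyshev (mul_nonneg hK0 (Real.rpow_nonneg hR (1 - a)))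
    linarith
  calc ∑ x, potential w μ x * ρ x ≤ (P + K / 2) * (M ^ a * R ^ (1 - a)) := by linarith
    _ ≤ K * M ^ a * R ^ (1 - a) := by
        rw [mul_assoc]
        exact mul_le_mul_of_nonneg_right (by linarith) hQ

lemma sum_potential_mul_le_of_sum_le_two_pow (hκ0 : 0 ≤ κ) (hκ1 : κ ≤ 1) (hC : 0 ≤ C)
    (hw : ∀ x, 0 ≤ w x) (hSMP : SurrogateMaxPrinciple κ C w) (hρ : ∀ x, 0 ≤ ρ x)
    (hCρ : HereditaryCarlesonLeOne w ρ) (ha : (1 - κ) / 2 ≤ a) (ha' : a ≤ 1 / 2) (hδ : 2 ≤ δ)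
    (hδa : 2 ≤ δ ^ a) (k : ℕ) :
    ∀ μ : X → ℝ, (∀ x, 0 ≤ μ x) → HereditaryCarlesonLeOne w μ → ∑ x, μ x ≤ 2 ^ k * ∑ x, ρ x →
      ∑ x, potential w μ x * ρ x ≤
        (1 + 2 * (C * δ ^ κ) ^ ((1 + κ) / 2)⁻¹) * (∑ x, μ x) ^ a * (∑ x, ρ x) ^ (1 - a) := by
  have hR : 0 ≤ ∑ x, ρ x := sum_nonneg fun x _ => hρ x
  have hK : 1 ≤ 1 + 2 * (C * δ ^ κ) ^ ((1 + κ) / 2)⁻¹ := by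
    linarith [show 0 ≤ (C * δ ^ κ) ^ ((1 + κ) / 2)⁻¹ by positivity]
  induction k with
  | zero =>
    intro μ hμ hCμ hμρ
    rw [pow_zero, one_mul] at hμρ
    rw [mul_assoc]
    exact (sum_potential_mul_le_of_sum_le hw hμ hCμ hCρ (by linarith) ha' hμρ).trans
      (le_mul_of_one_le_left (mul_nonneg (Real.rpow_nonneg (sum_nonneg fun x _ => hμ x) a)
        (Real.rpow_nonneg hR _)) hK)
  | succ k ih =>
    intro μ hμ hCμ hμρ
    by_cases hk : ∑ x, μ x ≤ 2 ^ k * ∑ x, ρ x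
    · exact ih μ hμ hCμ hk
    have hρμ : ∑ x, ρ x ≤ ∑ x, μ x :=
      (le_mul_of_one_le_left hR (one_le_pow₀ one_le_two)).trans (not_le.mp hk).le
    have hchebyshev := (mul_sum_indicator_lt_potential_le hw hμ δ).trans hCμ.energy_le
    have hμD : 0 ≤ ∑ x, {y | δ < potential w μ y}.indicator μ x :=
      sum_nonneg fun x _ => Set.indicator_nonneg (fun y _ => hμ y) x
    refine sum_potential_mul_le_of_indicator_lt_potential hκ0 hκ1 hC hw hSMP hμ hρ hCμ hCρ ha
      (by linarith) (by linarith) hδa hρμ le_rfl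
      (ih _ (Set.indicator_nonneg fun x _ => hμ x) (hCμ.indicator _) ?_)
    rw [pow_succ] at hμρ
    linarith [mul_le_mul_of_nonneg_right hδ hμD]

theorem sum_potential_mul_le (hκ0 : 0 ≤ κ) (hκ1 : κ ≤ 1) (hC : 0 ≤ C) (hw : ∀ x, 0 ≤ w x)
    (hSMP : SurrogateMaxPrinciple κ C w) (ha0 : 0 < a) (ha : (1 - κ) / 2 ≤ a) (ha' : a ≤ 1 / 2)
    (hμ : ∀ x, 0 ≤ μ x) (hρ : ∀ x, 0 ≤ ρ x) (hCμ : HereditaryCarlesonLeOne w μ)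
    (hCρ : HereditaryCarlesonLeOne w ρ) :
    ∑ x, potential w μ x * ρ x ≤
      (1 + 2 * (C * ((2 : ℝ) ^ a⁻¹) ^ κ) ^ ((1 + κ) / 2)⁻¹) *
        (∑ x, μ x) ^ a * (∑ x, ρ x) ^ (1 - a) := by
  have hM : 0 ≤ ∑ x, μ x := sum_nonneg fun x _ => hμ x
  rcases (sum_nonneg fun x (_ : x ∈ univ) => hρ x).eq_or_lt with hR | hR
  · have hρ0 := (sum_eq_zero_iff_of_nonneg fun x _ => hρ x).mp hR.symm
    rw [sum_eq_zero fun x hx => by rw [hρ0 x hx, mul_zero]]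
    positivity
  obtain ⟨k, hk⟩ := pow_unbounded_of_one_lt ((∑ x, μ x) / ∑ x, ρ x) one_lt_two
  have hδ : (2 : ℝ) ≤ 2 ^ a⁻¹ := by
    calc (2 : ℝ) = 2 ^ (1 : ℝ) := (Real.rpow_one 2).symm
      _ ≤ 2 ^ a⁻¹ := Real.rpow_le_rpow_of_exponent_le one_le_two
          ((one_le_inv₀ ha0).mpr (by linarith))
  exact sum_potential_mul_le_of_sum_le_two_pow hκ0 hκ1 hC hw hSMP hρ hCρ ha ha' hδ
    (Real.rpow_inv_rpow zero_le_two ha0.ne').ge k μ hμ hCμ ((div_le_iff₀ hR).mp hk.le)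

end CarlesonBound

theorem stmt18 (κ C : ℝ) (hκ0 : 0 < κ) (hκ1 : κ ≤ 1) (hC : 0 ≤ C) :
    ∃ Cc : ℝ, ∀ (n : ℕ) (T : Fin n → Type)
      [∀ i, Fintype (T i)] [∀ i, PartialOrder (T i)],
      (∀ i, IsTreeOrder (T i)) →
      ∀ w : (∀ i, T i) → ℝ, (∀ a, 0 ≤ w a) →
      -- surrogate maximum principle for the weight `w` with parameters `κ, C`
      (∀ (μ ρ : (∀ i, T i) → ℝ), (∀ a, 0 ≤ μ a) → (∀ a, 0 ≤ ρ a) →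
        ∀ δ : ℝ, 0 < δ →
        ∑ a, hI (fun x =>
            (if hI (fun y => w y * hIstar μ y) x ≤ δ then 1 else 0) *
              (w x * hIstar μ x)) a * ρ a
          ≤ C * (δ * ∑ a, ρ a) ^ κ *
            ((∑ a, (if hI (fun y => w y * hIstar μ y) a ≤ δ then 1 else 0) *
                (w a * hIstar μ a ^ 2)) *
              (∑ a, w a * hIstar ρ a ^ 2)) ^ ((1 - κ) / 2)) →
      ∀ μ ρ : (∀ i, T i) → ℝ, (∀ a, 0 ≤ μ a) → (∀ a, 0 ≤ ρ a) →
      -- hereditary Carleson constants at most `1`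
      (∀ E : Set (∀ i, T i),
        (∑ a, w a * hIstar (fun x => if x ∈ E then μ x else 0) a ^ 2) ≤
          ∑ a, if a ∈ E then μ a else 0) →
      (∀ E : Set (∀ i, T i),
        (∑ a, w a * hIstar (fun x => if x ∈ E then ρ x else 0) a ^ 2) ≤
          ∑ a, if a ∈ E then ρ a else 0) →
      ∑ a, hI (fun x => w x * hIstar μ x) a * ρ a ≤
        Cc * (∑ a, μ a) ^ ((1 : ℝ) / 2 - κ / (2 * (1 + κ))) *
          (∑ a, ρ a) ^ ((1 : ℝ) / 2 + κ / (2 * (1 + κ))) := by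
  have hκ' : κ / (2 * (1 + κ)) = 1 / 2 - 1 / (2 * (1 + κ)) := by field_simp; ring
  refine ⟨1 + 2 * (C * ((2 : ℝ) ^ (1 / 2 - κ / (2 * (1 + κ)))⁻¹) ^ κ) ^ ((1 + κ) / 2)⁻¹, ?_⟩
  intro n T _ _ _ w hw hSMP μ ρ hμ hρ hCμ hCρ
  have h := sum_potential_mul_le (a := 1 / 2 - κ / (2 * (1 + κ))) hκ0.le hκ1 hC hw hSMP
    (by rw [hκ', sub_sub_cancel]; positivity)
    (by rw [hκ', sub_sub_cancel, div_le_div_iff₀ two_pos (by positivity)]; nlinarith)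
    (sub_le_self _ (by positivity)) hμ hρ hCμ hCρ
  rwa [show 1 - (1 / 2 - κ / (2 * (1 + κ))) = 1 / 2 + κ / (2 * (1 + κ)) by ring] at h
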